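/- arXiv:2307.12923 — 5 statements merged into one kernel-verified Lean document; each statement's English description precedes it below -/
import Mathlib

section
/- Let σ, ρ be real numbers with 0 < σ < ρ < 1, and let M > 0 be arbitrary. Then there exists a function π : ℝ → ℝ in the class S (i.e., π is odd, differentiable with π'(x) > 0 for all x ∈ (−1,1), π is concave on [0,1], and π(x) = 1 for all x ≥ 1) such that, setting u = π⁻¹(ρ) and v = π⁻¹(σ) (well defined since π is a strictly increasing continuous bijection from [−1,1] onto [−1,1]), one has π'(v)/π'(u) ≥ M. -/
/-! Take `π = x ↦ A tanh (n x) + (1 - A tanh n) x` on `[-1, 1]`, extended by `±1`, with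
`σ < A < ρ`. Since `A < ρ`, the level `ρ` is reached only at some `u ≥ ρ - A`, where the
`tanh` term has flattened out, so `π'(u) ≤ A / (ρ - A)² + 1` uniformly in `n ≥ 1`. Since
`σ < A`, the level `σ` is reached where `tanh (n v) ≤ σ / A`, so `π'(v) ≥ n (A² - σ²) / A`
grows linearly in `n`. -/

open Set Topology

namespace Real

theorem hasDerivAt_tanh (x : ℝ) : HasDerivAt tanh (1 / cosh x ^ 2) x := by
  rw [show tanh = sinh / cosh from funext tanh_eq_sinh_div_cosh, ← cosh_sq_sub_sinh_sq x]
  exact ((hasDerivAt_sinh x).div (hasDerivAt_cosh x) (cosh_pos x).ne').congr_deriv (by ring)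

theorem one_div_cosh_sq (x : ℝ) : 1 / cosh x ^ 2 = 1 - tanh x ^ 2 := by
  rw [tanh_eq_sinh_div_cosh, div_pow, eq_sub_iff_add_eq, ← add_div, ← cosh_sq',
    div_self (pow_pos (cosh_pos x) 2).ne']

theorem tanh_nonneg {x : ℝ} (hx : 0 ≤ x) : 0 ≤ tanh x := by
  rw [tanh_eq_sinh_div_cosh]
  exact div_nonneg (sinh_nonneg_iff.2 hx) (cosh_pos x).le

theorem sq_le_cosh_sq (x : ℝ) : x ^ 2 ≤ cosh x ^ 2 := by
  have h : |x| ≤ cosh x := by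
    rw [← cosh_abs]
    exact (self_le_sinh_iff.2 (abs_nonneg x)).trans (sinh_lt_cosh _).le
  simpa only [sq_abs] using pow_le_pow_left₀ (abs_nonneg x) h 2

end Real

noncomputable def clampUnit (f : ℝ → ℝ) (x : ℝ) : ℝ := f (max (-1) (min 1 x))

section clampUnit

variable {f : ℝ → ℝ} {x : ℝ}

theorem clampUnit_of_mem (hx : x ∈ Icc (-1) 1) : clampUnit f x = f x := by
  rw [clampUnit, min_eq_right hx.2, max_eq_right hx.1]

theorem clampUnit_of_one_le (hx : 1 ≤ x) : clampUnit f x = f 1 := by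
  rw [clampUnit, min_eq_left hx, max_eq_right (by norm_num)]

theorem clampUnit_neg (hf : ∀ y, f (-y) = -f y) (x : ℝ) :
    clampUnit f (-x) = -clampUnit f x := by
  rw [clampUnit, clampUnit, ← hf]
  congr 1
  grind

theorem clampUnit_eventuallyEq (hx : x ∈ Ioo (-1) 1) : clampUnit f =ᶠ[𝓝 x] f := by
  filter_upwards [Ioo_mem_nhds hx.1 hx.2] with y hy
  exact clampUnit_of_mem (Ioo_subset_Icc_self hy)

theorem deriv_clampUnit (hx : x ∈ Ioo (-1) 1) : deriv (clampUnit f) x = deriv f x :=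
  (clampUnit_eventuallyEq hx).deriv_eq

theorem DifferentiableAt.clampUnit (hf : DifferentiableAt ℝ f x) (hx : x ∈ Ioo (-1) 1) :
    DifferentiableAt ℝ (clampUnit f) x :=
  hf.congr_of_eventuallyEq (clampUnit_eventuallyEq hx)

theorem ConcaveOn.clampUnit {s : Set ℝ} (hf : ConcaveOn ℝ s f) (hs : s ⊆ Icc (-1) 1) :
    ConcaveOn ℝ s (clampUnit f) :=
  hf.congr fun _ hy => (clampUnit_of_mem (hs hy)).symm

end clampUnit

section tanhSwitch

open Real

noncomputable def tanhSwitch (A n x : ℝ) : ℝ := A * tanh (n * x) + (1 - A * tanh n) * x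

variable {A n : ℝ}

theorem tanhSwitch_neg (A n x : ℝ) : tanhSwitch A n (-x) = -tanhSwitch A n x := by
  simp only [tanhSwitch, mul_neg, tanh_neg]
  ring

theorem tanhSwitch_zero (A n : ℝ) : tanhSwitch A n 0 = 0 := by
  simp [tanhSwitch]

theorem tanhSwitch_one (A n : ℝ) : tanhSwitch A n 1 = 1 := by
  simp only [tanhSwitch, mul_one]
  ring

theorem hasDerivAt_tanhSwitch (A n x : ℝ) :
    HasDerivAt (tanhSwitch A n) (A * n / cosh (n * x) ^ 2 + (1 - A * tanh n)) x := by
  refine ((((hasDerivAt_tanh (n * x)).comp x ((hasDerivAt_id x).const_mul n)).const_mul A).add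
    ((hasDerivAt_id x).const_mul (1 - A * tanh n))).congr_deriv ?_
  ring

theorem differentiable_tanhSwitch (A n : ℝ) : Differentiable ℝ (tanhSwitch A n) :=
  fun x => (hasDerivAt_tanhSwitch A n x).differentiableAt

theorem deriv_tanhSwitch (A n x : ℝ) :
    deriv (tanhSwitch A n) x = A * n / cosh (n * x) ^ 2 + (1 - A * tanh n) :=
  (hasDerivAt_tanhSwitch A n x).deriv

theorem mul_tanh_lt_one (hA₁ : A ≤ 1) (hn : 0 ≤ n) : A * tanh n < 1 := by
  nlinarith [tanh_lt_one n, tanh_nonneg hn]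

theorem deriv_tanhSwitch_pos (hA₀ : 0 ≤ A) (hA₁ : A ≤ 1) (hn : 0 ≤ n) (x : ℝ) :
    0 < deriv (tanhSwitch A n) x := by
  have hslope : 0 < 1 - A * tanh n := sub_pos.2 (mul_tanh_lt_one hA₁ hn)
  have hcosh := cosh_pos (n * x)
  rw [deriv_tanhSwitch]
  positivity

theorem concaveOn_tanhSwitch (hA : 0 ≤ A) (hn : 0 ≤ n) :
    ConcaveOn ℝ (Ici 0) (tanhSwitch A n) := by
  have hf := differentiable_tanhSwitch A n
  refine AntitoneOn.concaveOn_of_deriv (convex_Ici 0) hf.continuous.continuousOn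
    hf.differentiableOn ?_
  rw [interior_Ici]
  intro x hx y hy hxy
  have hcosh : cosh (n * x) ≤ cosh (n * y) := by
    rw [cosh_le_cosh, abs_of_nonneg (mul_nonneg hn (le_of_lt hx)),
      abs_of_nonneg (mul_nonneg hn (le_of_lt hy))]
    exact mul_le_mul_of_nonneg_left hxy hn
  have hcosh₀ := cosh_pos (n * x)
  simp only [deriv_tanhSwitch]
  gcongr

theorem exists_tanhSwitch_eq (A n : ℝ) {y : ℝ} (hy : y ∈ Ioo 0 1) :
    ∃ x ∈ Ioo 0 1, tanhSwitch A n x = y :=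
  intermediate_value_Ioo zero_le_one (differentiable_tanhSwitch A n).continuous.continuousOn
    (by rwa [tanhSwitch_zero, tanhSwitch_one])

theorem le_deriv_tanhSwitch (hA₀ : 0 < A) (hA₁ : A ≤ 1) (hn : 0 ≤ n) {σ v : ℝ} (hv : 0 ≤ v)
    (hfv : tanhSwitch A n v ≤ σ) : n * ((A ^ 2 - σ ^ 2) / A) ≤ deriv (tanhSwitch A n) v := by
  have hslope : 0 ≤ 1 - A * tanh n := by linarith [mul_tanh_lt_one hA₁ hn]
  have ht₀ : 0 ≤ tanh (n * v) := tanh_nonneg (mul_nonneg hn hv)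
  have ht : tanh (n * v) ≤ σ / A := by
    rw [le_div_iff₀ hA₀, mul_comm]
    have := mul_nonneg hslope hv
    unfold tanhSwitch at hfv
    linarith
  calc n * ((A ^ 2 - σ ^ 2) / A) = A * n * (1 - (σ / A) ^ 2) := by field_simp
    _ ≤ A * n * (1 - tanh (n * v) ^ 2) := by gcongr
    _ ≤ deriv (tanhSwitch A n) v := by
      rw [deriv_tanhSwitch, div_eq_mul_one_div (A * n), one_div_cosh_sq]
      linarith

theorem deriv_tanhSwitch_le (hA : 0 ≤ A) (hn : 1 ≤ n) {ρ u : ℝ} (hAρ : A < ρ) (hu : 0 ≤ u)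
    (hfu : ρ ≤ tanhSwitch A n u) : deriv (tanhSwitch A n) u ≤ A / (ρ - A) ^ 2 + 1 := by
  have hslope : 0 ≤ A * tanh n := mul_nonneg hA (tanh_nonneg (by linarith))
  have hδu : ρ - A ≤ u := by
    have := mul_le_mul_of_nonneg_left (tanh_lt_one (n * u)).le hA
    unfold tanhSwitch at hfu
    nlinarith
  have hcosh : n * (ρ - A) ^ 2 ≤ cosh (n * u) ^ 2 := calc
    n * (ρ - A) ^ 2 ≤ n ^ 2 * u ^ 2 := by gcongr; nlinarith
    _ = (n * u) ^ 2 := by ring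
    _ ≤ cosh (n * u) ^ 2 := sq_le_cosh_sq _
  have hδ : 0 < (ρ - A) ^ 2 := pow_pos (sub_pos.2 hAρ) 2
  have hsteep : A * n / cosh (n * u) ^ 2 ≤ A / (ρ - A) ^ 2 := by
    rw [div_le_div_iff₀ (pow_pos (cosh_pos _) 2) hδ]
    nlinarith
  rw [deriv_tanhSwitch]
  linarith

end tanhSwitch

theorem exists_switching_function_with_large_derivative_ratio_general
    (σ ρ M : ℝ) (hσ : 0 < σ) (hσρ : σ < ρ) (hρ : ρ < 1) :
    ∃ π : ℝ → ℝ,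
      (∀ x : ℝ, π (-x) = -π x) ∧
      (∀ x ∈ Set.Ioo (-1 : ℝ) 1, DifferentiableAt ℝ π x) ∧
      (∀ x ∈ Set.Ioo (-1 : ℝ) 1, 0 < deriv π x) ∧
      ConcaveOn ℝ (Set.Icc (0 : ℝ) 1) π ∧
      (∀ x : ℝ, 1 ≤ x → π x = 1) ∧
      ∃ u v : ℝ, u ∈ Set.Ioo (-1 : ℝ) 1 ∧ v ∈ Set.Ioo (-1 : ℝ) 1 ∧
        π u = ρ ∧ π v = σ ∧ M ≤ deriv π v / deriv π u := by
  obtain ⟨A, hσA, hAρ⟩ := exists_between hσρ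
  have hA₀ : 0 < A := hσ.trans hσA
  have hA₁ : A ≤ 1 := (hAρ.trans hρ).le
  have hK : 0 < (A ^ 2 - σ ^ 2) / A / (A / (ρ - A) ^ 2 + 1) := by
    have : 0 < A ^ 2 - σ ^ 2 := by nlinarith
    positivity
  obtain ⟨n, hn, hnM⟩ : ∃ n : ℝ, 1 ≤ n ∧ M ≤ n * ((A ^ 2 - σ ^ 2) / A) / (A / (ρ - A) ^ 2 + 1) :=
    ⟨max 1 (M / _), le_max_left _ _,
      by rw [mul_div_assoc, ← div_le_iff₀ hK]; exact le_max_right _ _⟩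
  have hn₀ : 0 ≤ n := zero_le_one.trans hn
  have hderiv := deriv_tanhSwitch_pos hA₀.le hA₁ hn₀
  obtain ⟨u, hu, hfu⟩ := exists_tanhSwitch_eq A n ⟨hσ.trans hσρ, hρ⟩
  obtain ⟨v, hv, hfv⟩ := exists_tanhSwitch_eq A n ⟨hσ, hσρ.trans hρ⟩
  have hIoo : Ioo (0 : ℝ) 1 ⊆ Ioo (-1) 1 := Ioo_subset_Ioo_left (by norm_num)
  have hconcave : ConcaveOn ℝ (Icc 0 1) (tanhSwitch A n) :=
    (concaveOn_tanhSwitch hA₀.le hn₀).subset Icc_subset_Ici_self (convex_Icc 0 1)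
  refine ⟨clampUnit (tanhSwitch A n), clampUnit_neg (tanhSwitch_neg A n),
    fun x hx => (differentiable_tanhSwitch A n x).clampUnit hx,
    fun x hx => by rw [deriv_clampUnit hx]; exact hderiv x,
    hconcave.clampUnit (Icc_subset_Icc_left (by norm_num)),
    fun x hx => (clampUnit_of_one_le hx).trans (tanhSwitch_one A n), u, v, hIoo hu, hIoo hv,
    (clampUnit_of_mem (Ioo_subset_Icc_self (hIoo hu))).trans hfu,
    (clampUnit_of_mem (Ioo_subset_Icc_self (hIoo hv))).trans hfv, ?_⟩
  rw [deriv_clampUnit (hIoo hu), deriv_clampUnit (hIoo hv)]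
  exact hnM.trans <| div_le_div₀ (hderiv v).le
    (le_deriv_tanhSwitch hA₀ hA₁ hn₀ hv.1.le hfv.le) (hderiv u)
    (deriv_tanhSwitch_le hA₀.le hn hAρ hu.1.le hfu.ge)

/-- For `0 < σ < ρ < 1` and any `M > 0`, there is a switching function `π` in the
class `S` (odd, with positive derivative on `(−1,1)`, concave on `[0,1]`, and equal
to `1` on `[1,∞)`) such that, with `u = π⁻¹(ρ)` and `v = π⁻¹(σ)`, the ratio
`π'(v)/π'(u)` is at least `M`. -/
theorem exists_switching_function_with_large_derivative_ratio
    (σ ρ M : ℝ) (hσ : 0 < σ) (hσρ : σ < ρ) (hρ : ρ < 1) (hM : 0 < M) :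
    ∃ π : ℝ → ℝ,
      (∀ x : ℝ, π (-x) = -π x) ∧
      (∀ x ∈ Set.Ioo (-1 : ℝ) 1, DifferentiableAt ℝ π x) ∧
      (∀ x ∈ Set.Ioo (-1 : ℝ) 1, 0 < deriv π x) ∧
      ConcaveOn ℝ (Set.Icc (0 : ℝ) 1) π ∧
      (∀ x : ℝ, 1 ≤ x → π x = 1) ∧
      ∃ u v : ℝ, u ∈ Set.Ioo (-1 : ℝ) 1 ∧ v ∈ Set.Ioo (-1 : ℝ) 1 ∧
        π u = ρ ∧ π v = σ ∧ M ≤ deriv π v / deriv π u :=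
  exists_switching_function_with_large_derivative_ratio_general σ ρ M hσ hσρ hρ
end

section
/- Let f, g be real-valued C¹ functions of two variables and let (ρ*, σ*) ∈ (−1,1)² be a fixed point, with Jacobian matrix J = [[F, B], [C, G]] at (ρ*, σ*), where F = ∂_ρ f, B = ∂_σ f, C = ∂_ρ g, G = ∂_σ g, and assume G ≠ 0. Then there exists a function π in the class S (odd, π' > 0 on (−1,1), concave on [0,1], equal to 1 on [1,∞)) such that det(J) > 0 and (π'(u*)·F + π'(v*)·G)·(F + G) < 0, where u* = π⁻¹(ρ*) and v* = π⁻¹(σ*), if and only if the following conditions all hold: (1) det(J) = F·G − B·C > 0; (2) F/G < 0; and (3) either (a) F/G < −1 and |ρ*| > |σ*|, or (b) F/G > −1 and |ρ*| < |σ*|. -/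
/-!
Write `r = F / G`, `a = π'(u*)` and `b = π'(v*)`. Since `(aF + bG)(F + G) = G² (ar + b)(r + 1)`,
the trace condition says that `ar + b` and `r + 1` have opposite signs; as `a, b > 0` this forces
`r < 0` and `a < b` when `r < -1`, `b < a` when `r > -1`. For `π ∈ S` the derivative is even and
decreasing in `|x|` (concavity) while `|π|` is increasing in `|x|`, so comparing `a` with `b`
compares `|ρ*|` with `|σ*|`. Conversely, given `|p| < |s| < 1` and any `M > 0`, the switching
function `(1 - h) q(x) + h q(x / m)` built from a quadratic step `q`, with `h` halfway between
`|p|` and `|s|` and `m` small, climbs so steeply to height `h` that its slope at the preimage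
of `p` exceeds `M` times its slope at the preimage of `s`.
-/

open Set

lemma hasDerivAt_max_zero_sq (t : ℝ) :
    HasDerivAt (fun x : ℝ => max x 0 ^ 2) (2 * max t 0) t := by
  refine hasDerivAt_of_hasDerivAt_of_ne' (f := fun x : ℝ => max x 0 ^ 2)
    (g := fun x => 2 * max x 0) (x := 0) (fun y hy => ?_) (by fun_prop) (by fun_prop) t
  rcases hy.lt_or_gt with hy | hy
  · rw [max_eq_right hy.le, mul_zero]
    refine (hasDerivAt_const y (0 : ℝ)).congr_of_eventuallyEq ?_
    filter_upwards [eventually_lt_nhds hy] with x hx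
    simp [max_eq_right hx.le]
  · rw [max_eq_left hy.le]
    refine (by simpa using hasDerivAt_pow 2 y : HasDerivAt (fun x : ℝ => x ^ 2) (2 * y) y)
      |>.congr_of_eventuallyEq ?_
    filter_upwards [eventually_gt_nhds hy] with x hx
    rw [max_eq_left hx.le]

lemma max_zero_sq_add_max_neg_zero_sq (u : ℝ) : max u 0 ^ 2 + max (-u) 0 ^ 2 = u ^ 2 := by
  rcases le_total u 0 with hu | hu
  · rw [max_eq_right hu, max_eq_left (neg_nonneg.2 hu)]; ring
  · rw [max_eq_left hu, max_eq_right (neg_nonpos.2 hu)]; ring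

/-- The odd `C¹` step equal to `2t - t|t|` on `[-1, 1]` and to `±1` outside, written as a second
difference of `t ↦ (max t 0)²` so that it is differentiable everywhere. -/
def quadStep (t : ℝ) : ℝ := max (t + 1) 0 ^ 2 - 2 * max t 0 ^ 2 + max (t - 1) 0 ^ 2 - 1

lemma quadStep_neg (t : ℝ) : quadStep (-t) = -quadStep t := by
  rw [quadStep, quadStep, show -t + 1 = -(t - 1) by ring, show -t - 1 = -(t + 1) by ring]
  linear_combination max_zero_sq_add_max_neg_zero_sq (t + 1) +
    max_zero_sq_add_max_neg_zero_sq (t - 1) - 2 * max_zero_sq_add_max_neg_zero_sq t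

lemma quadStep_of_nonneg {t : ℝ} (ht : 0 ≤ t) :
    quadStep t = 2 * t - t ^ 2 + max (t - 1) 0 ^ 2 := by
  rw [quadStep, max_eq_left (by linarith), max_eq_left ht]; ring

lemma quadStep_of_one_le {t : ℝ} (ht : 1 ≤ t) : quadStep t = 1 := by
  rw [quadStep_of_nonneg (by linarith), max_eq_left (by linarith)]; ring

lemma quadStep_nonneg {t : ℝ} (ht : 0 ≤ t) : 0 ≤ quadStep t := by
  rw [quadStep_of_nonneg ht]
  rcases le_total t 1 with h | h
  · nlinarith [sq_nonneg (max (t - 1) 0)]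
  · rw [max_eq_left (by linarith)]; nlinarith

lemma quadStep_le {t : ℝ} (ht : 0 ≤ t) : quadStep t ≤ 2 * t := by
  rw [quadStep_of_nonneg ht]
  have : max (t - 1) 0 ≤ t := max_le (by linarith) ht
  nlinarith [le_max_right (t - 1) 0]

lemma hasDerivAt_quadStep (t : ℝ) : HasDerivAt quadStep (2 * max (1 - |t|) 0) t := by
  have hplus := (hasDerivAt_max_zero_sq (t + 1)).comp_add_const t 1
  have hminus := (hasDerivAt_max_zero_sq (t - 1)).comp_sub_const t 1
  refine (((hplus.sub ((hasDerivAt_max_zero_sq t).const_mul 2)).add hminus).sub_const 1)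
    |>.congr_deriv ?_
  rw [abs_eq_max_neg]
  simp only [max_def]
  split_ifs <;> linarith

lemma deriv_neg_of_odd {f : ℝ → ℝ} (hf : ∀ x, f (-x) = -f x) (x : ℝ) :
    deriv f (-x) = deriv f x := by
  have h := deriv_comp_neg f x
  rw [show (fun y => f (-y)) = fun y => -f y from funext hf, deriv.fun_neg] at h
  linarith

lemma exists_mem_Ioo_apply_eq_of_odd {f : ℝ → ℝ} (hf : ∀ x, f (-x) = -f x) {x t : ℝ}
    (hx : x ∈ Ico (0 : ℝ) 1) (h : f x = |t|) :
    ∃ x' ∈ Ioo (-1 : ℝ) 1, f x' = t ∧ deriv f x' = deriv f x := by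
  rcases le_total 0 t with ht | ht
  · exact ⟨x, ⟨by linarith [hx.1], hx.2⟩, by rw [h, abs_of_nonneg ht], rfl⟩
  · exact ⟨-x, ⟨by linarith [hx.2], by linarith [hx.1]⟩,
      by rw [hf, h, abs_of_nonpos ht, neg_neg], deriv_neg_of_odd hf x⟩

/-- The class `S` of switching functions. -/
structure IsSwitchingFunction (π : ℝ → ℝ) : Prop where
  odd : ∀ x, π (-x) = -π x
  differentiableAt : ∀ x ∈ Ioo (-1 : ℝ) 1, DifferentiableAt ℝ π x
  deriv_pos : ∀ x ∈ Ioo (-1 : ℝ) 1, 0 < deriv π x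
  concaveOn : ConcaveOn ℝ (Icc 0 1) π
  eq_one : ∀ x, 1 ≤ x → π x = 1

namespace IsSwitchingFunction

variable {π : ℝ → ℝ} {x y : ℝ}

lemma map_zero (hπ : IsSwitchingFunction π) : π 0 = 0 := by
  have h := hπ.odd 0
  rw [neg_zero] at h
  linarith

lemma strictMonoOn (hπ : IsSwitchingFunction π) : StrictMonoOn π (Ioo (-1) 1) :=
  strictMonoOn_of_deriv_pos (convex_Ioo _ _)
    (fun x hx => (hπ.differentiableAt x hx).continuousAt.continuousWithinAt)
    (by rw [interior_Ioo]; exact hπ.deriv_pos)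

lemma abs_apply (hπ : IsSwitchingFunction π) (hx : x ∈ Ioo (-1 : ℝ) 1) : |π x| = π |x| := by
  have h0 : (0 : ℝ) ∈ Ioo (-1 : ℝ) 1 := by norm_num
  rcases le_total 0 x with h | h
  · rw [abs_of_nonneg h, abs_of_nonneg]
    simpa only [hπ.map_zero] using hπ.strictMonoOn.monotoneOn h0 hx h
  · rw [abs_of_nonpos h, hπ.odd, abs_of_nonpos]
    simpa only [hπ.map_zero] using hπ.strictMonoOn.monotoneOn hx h0 h

lemma abs_apply_lt_abs_apply (hπ : IsSwitchingFunction π) (hy : y ∈ Ioo (-1 : ℝ) 1)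
    (hxy : |x| < |y|) : |π x| < |π y| := by
  have hy1 : |y| < 1 := abs_lt.2 hy
  have hx : x ∈ Ioo (-1 : ℝ) 1 := abs_lt.1 (hxy.trans hy1)
  rw [hπ.abs_apply hx, hπ.abs_apply hy]
  exact hπ.strictMonoOn ⟨by linarith [abs_nonneg x], by linarith⟩
    ⟨by linarith [abs_nonneg y], hy1⟩ hxy

lemma deriv_abs (hπ : IsSwitchingFunction π) (x : ℝ) : deriv π |x| = deriv π x := by
  rcases le_total 0 x with h | h
  · rw [abs_of_nonneg h]
  · rw [abs_of_nonpos h, deriv_neg_of_odd hπ.odd]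

lemma deriv_le_deriv_of_abs_le (hπ : IsSwitchingFunction π) (hy : y ∈ Ioo (-1 : ℝ) 1)
    (hxy : |x| ≤ |y|) : deriv π y ≤ deriv π x := by
  have hy1 : |y| < 1 := abs_lt.2 hy
  rw [← hπ.deriv_abs x, ← hπ.deriv_abs y]
  refine (hπ.concaveOn.subset (Icc_subset_Icc le_rfl hy1.le) (convex_Icc _ _)).antitoneOn_deriv
    (fun z hz => hπ.differentiableAt z ⟨by linarith [hz.1], hz.2.trans_lt hy1⟩)
    ⟨abs_nonneg x, hxy⟩ ⟨abs_nonneg y, le_rfl⟩ hxy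

lemma abs_apply_lt_of_deriv_lt (hπ : IsSwitchingFunction π) (hx : x ∈ Ioo (-1 : ℝ) 1)
    (hy : y ∈ Ioo (-1 : ℝ) 1) (h : deriv π x < deriv π y) : |π y| < |π x| :=
  hπ.abs_apply_lt_abs_apply hx <|
    lt_of_not_ge fun hxy => h.not_ge (hπ.deriv_le_deriv_of_abs_le hy hxy)

end IsSwitchingFunction

/-- For small `m`, this rises steeply to about `h` on `[0, m]`, then slowly to `1` on `[m, 1]`. -/
noncomputable def twoScaleSwitch (h m x : ℝ) : ℝ := (1 - h) * quadStep x + h * quadStep (x / m)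

lemma hasDerivAt_twoScaleSwitch (h m x : ℝ) :
    HasDerivAt (twoScaleSwitch h m)
      ((1 - h) * (2 * max (1 - |x|) 0) + h / m * (2 * max (1 - |x / m|) 0)) x := by
  have hq := (hasDerivAt_quadStep (x / m)).comp x ((hasDerivAt_id' x).div_const m)
  exact (((hasDerivAt_quadStep x).const_mul (1 - h)).add (hq.const_mul h)).congr_deriv (by ring)

lemma isSwitchingFunction_twoScaleSwitch {h m : ℝ} (h0 : 0 ≤ h) (h1 : h < 1) (hm0 : 0 < m)
    (hm1 : m ≤ 1) : IsSwitchingFunction (twoScaleSwitch h m) where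
  odd x := by simp only [twoScaleSwitch, neg_div, quadStep_neg]; ring
  differentiableAt x _ := (hasDerivAt_twoScaleSwitch h m x).differentiableAt
  deriv_pos x hx := by
    rw [(hasDerivAt_twoScaleSwitch h m x).deriv]
    have : 0 < max (1 - |x|) 0 := lt_max_of_lt_left (by linarith [abs_lt.2 hx])
    exact add_pos_of_pos_of_nonneg (by have := sub_pos.2 h1; positivity) (by positivity)
  concaveOn := by
    refine AntitoneOn.concaveOn_of_deriv (convex_Icc 0 1)
      (fun x _ => (hasDerivAt_twoScaleSwitch h m x).continuousAt.continuousWithinAt)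
      (fun x _ => (hasDerivAt_twoScaleSwitch h m x).differentiableAt.differentiableWithinAt) ?_
    rw [interior_Icc]
    intro x hx y hy hxy
    rw [(hasDerivAt_twoScaleSwitch h m x).deriv, (hasDerivAt_twoScaleSwitch h m y).deriv,
      abs_of_pos hx.1, abs_of_pos hy.1, abs_of_pos (div_pos hx.1 hm0),
      abs_of_pos (div_pos hy.1 hm0)]
    have := sub_pos.2 h1
    gcongr
  eq_one x hx := by
    rw [twoScaleSwitch, quadStep_of_one_le hx,
      quadStep_of_one_le ((one_le_div hm0).2 (hm1.trans hx))]
    ring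

lemma twoScaleSwitch_self_mem_Icc {h m : ℝ} (h0 : 0 ≤ h) (h1 : h ≤ 1) (hm0 : 0 < m) :
    twoScaleSwitch h m m ∈ Icc h (h + 2 * m) := by
  rw [twoScaleSwitch, div_self hm0.ne', quadStep_of_one_le le_rfl]
  have := quadStep_nonneg hm0.le
  have := quadStep_le hm0.le
  constructor <;> nlinarith

lemma deriv_twoScaleSwitch_le_two {h m y : ℝ} (h0 : 0 ≤ h) (hm0 : 0 < m) (hy : m ≤ y) :
    deriv (twoScaleSwitch h m) y ≤ 2 := by
  have hy' : 1 ≤ |y / m| := by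
    rw [abs_of_pos (div_pos (hm0.trans_le hy) hm0)]
    exact (one_le_div hm0).2 hy
  rw [(hasDerivAt_twoScaleSwitch h m y).deriv, max_eq_right (show 1 - |y / m| ≤ 0 by linarith)]
  have : max (1 - |y|) 0 ≤ 1 := max_le (by linarith [abs_nonneg y]) zero_le_one
  nlinarith [le_max_right (1 - |y|) 0]

lemma exists_isSwitchingFunction_deriv_lt_of_nonneg {p s M : ℝ} (hp : 0 ≤ p) (hps : p < s)
    (hs : s < 1) (hM : 0 < M) :
    ∃ π, IsSwitchingFunction π ∧ ∃ x ∈ Ico (0 : ℝ) 1, ∃ y ∈ Ico (0 : ℝ) 1,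
      π x = p ∧ π y = s ∧ M * deriv π y < deriv π x := by
  set h := (p + s) / 2
  set m := (s - p) / (4 * (1 + M))
  have hm0 : 0 < m := div_pos (by linarith) (by linarith)
  have hm1 : m ≤ 1 := (div_le_one (by linarith)).2 (by linarith)
  have hpm : h - p = 2 * (1 + M) * m := by simp only [h, m]; field_simp; ring
  have hsm : s - h = 2 * (1 + M) * m := by simp only [h, m]; field_simp; ring
  have hπ := isSwitchingFunction_twoScaleSwitch (by linarith) (by linarith) hm0 hm1
  set π := twoScaleSwitch h m
  have hcont : ContinuousOn π (Icc 0 1) := fun x _ =>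
    (hasDerivAt_twoScaleSwitch h m x).continuousAt.continuousWithinAt
  have hπm : π m ∈ Icc h (h + 2 * m) :=
    twoScaleSwitch_self_mem_Icc (by linarith) (by linarith) hm0
  obtain ⟨x, hx, hπx⟩ : p ∈ π '' Ico 0 m :=
    intermediate_value_Ico hm0.le (hcont.mono (Icc_subset_Icc le_rfl hm1))
      ⟨by rw [hπ.map_zero]; exact hp, by linarith [hπm.1]⟩
  obtain ⟨y, hy, hπy⟩ : s ∈ π '' Ico m 1 :=
    intermediate_value_Ico hm1 (hcont.mono (Icc_subset_Icc hm0.le le_rfl))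
      ⟨by nlinarith [hπm.2], by rw [hπ.eq_one 1 le_rfl]; exact hs⟩
  have hx1 : x ∈ Ioo (-1 : ℝ) 1 := ⟨by linarith [hx.1], hx.2.trans_le hm1⟩
  -- the chord from `x` to `m` rises by at least `h - p` over a length at most `m`, and
  -- concavity puts the slope at `x` above it
  have hslope : π m - π x ≤ deriv π x * (m - x) := by
    have := hπ.concaveOn.slope_le_deriv ⟨hx.1, hx1.2.le⟩ ⟨hm0.le, hm1⟩ hx.2
      (hπ.differentiableAt x hx1)
    rwa [slope_def_field, div_le_iff₀ (sub_pos.2 hx.2)] at this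
  have hdx : 2 * (1 + M) ≤ deriv π x := by
    have hd := hπ.deriv_pos x hx1
    refine le_of_mul_le_mul_right ?_ hm0
    nlinarith [hπm.1, hx.1]
  have hdy : deriv π y ≤ 2 := deriv_twoScaleSwitch_le_two (by linarith) hm0 hy.1
  refine ⟨π, hπ, x, ⟨hx.1, hx1.2⟩, y, ⟨hm0.le.trans hy.1, hy.2⟩, hπx, hπy, ?_⟩
  calc M * deriv π y ≤ M * 2 := by gcongr
    _ < 2 * (1 + M) := by linarith
    _ ≤ deriv π x := hdx

lemma exists_isSwitchingFunction_deriv_lt {p s M : ℝ} (hps : |p| < |s|) (hs : |s| < 1)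
    (hM : 0 < M) :
    ∃ π, IsSwitchingFunction π ∧ ∃ x ∈ Ioo (-1 : ℝ) 1, ∃ y ∈ Ioo (-1 : ℝ) 1,
      π x = p ∧ π y = s ∧ M * deriv π y < deriv π x := by
  obtain ⟨π, hπ, x, hx, y, hy, hπx, hπy, hxy⟩ :=
    exists_isSwitchingFunction_deriv_lt_of_nonneg (abs_nonneg p) hps hs hM
  obtain ⟨x', hx', rfl, hdx⟩ := exists_mem_Ioo_apply_eq_of_odd hπ.odd hx hπx
  obtain ⟨y', hy', rfl, hdy⟩ := exists_mem_Ioo_apply_eq_of_odd hπ.odd hy hπy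
  exact ⟨π, hπ, x', hx', y', hy', rfl, rfl, by rwa [hdx, hdy]⟩

lemma mul_add_mul_mul_add_neg_iff_div {a b F G : ℝ} (hG : G ≠ 0) :
    (a * F + b * G) * (F + G) < 0 ↔ (a * (F / G) + b) * (F / G + 1) < 0 := by
  have hG2 : 0 < G ^ 2 := by positivity
  rw [show (a * F + b * G) * (F + G) = G ^ 2 * ((a * (F / G) + b) * (F / G + 1)) by
    field_simp]
  exact ⟨fun h => neg_of_mul_neg_right h hG2.le, mul_neg_of_pos_of_neg hG2⟩

/-- Characterization of when a switching function `π` in the class `S` (odd, with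
positive derivative on `(−1,1)`, concave on `[0,1]`, equal to `1` on `[1,∞)`) can
change the stability of a fixed point `(ρ*, σ*) ∈ (−1,1)²` whose Jacobian (with the
ramp regularization) is `J = [[F, B], [C, G]]`: there exists `π ∈ S` with
`det J > 0` and `(π'(u*)·F + π'(v*)·G)·(F + G) < 0` (where `π(u*) = ρ*`,
`π(v*) = σ*`) if and only if `det J = F·G − B·C > 0`, `F/G < 0`, and either
`F/G < −1 ∧ |ρ*| > |σ*|` or `F/G > −1 ∧ |ρ*| < |σ*|`. -/
theorem stability_change_characterization
    (F B C G ρ σ : ℝ) (hG : G ≠ 0)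
    (hρ : ρ ∈ Set.Ioo (-1 : ℝ) 1) (hσ : σ ∈ Set.Ioo (-1 : ℝ) 1) :
    (∃ π : ℝ → ℝ,
      (∀ x : ℝ, π (-x) = -π x) ∧
      (∀ x ∈ Set.Ioo (-1 : ℝ) 1, DifferentiableAt ℝ π x) ∧
      (∀ x ∈ Set.Ioo (-1 : ℝ) 1, 0 < deriv π x) ∧
      ConcaveOn ℝ (Set.Icc (0 : ℝ) 1) π ∧
      (∀ x : ℝ, 1 ≤ x → π x = 1) ∧
      ∃ u v : ℝ, u ∈ Set.Ioo (-1 : ℝ) 1 ∧ v ∈ Set.Ioo (-1 : ℝ) 1 ∧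
        π u = ρ ∧ π v = σ ∧
        F * G - B * C > 0 ∧
        (deriv π u * F + deriv π v * G) * (F + G) < 0)
    ↔
    (F * G - B * C > 0 ∧ F / G < 0 ∧
      ((F / G < -1 ∧ |ρ| > |σ|) ∨ (F / G > -1 ∧ |ρ| < |σ|))) := by
  simp only [mul_add_mul_mul_add_neg_iff_div hG, mul_neg_iff]
  constructor
  · rintro ⟨π, hodd, hdiff, hpos, hconc, hone, u, v, hu, hv, rfl, rfl, hdet, htr⟩
    have hπ : IsSwitchingFunction π := ⟨hodd, hdiff, hpos, hconc, hone⟩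
    have ha := hπ.deriv_pos u hu
    have hb := hπ.deriv_pos v hv
    refine ⟨hdet, ?_⟩
    rcases htr with ⟨htr, hr⟩ | ⟨htr, hr⟩
    · exact ⟨by linarith, .inl ⟨by linarith, hπ.abs_apply_lt_of_deriv_lt hu hv (by nlinarith)⟩⟩
    · exact ⟨by nlinarith, .inr ⟨by linarith, hπ.abs_apply_lt_of_deriv_lt hv hu (by nlinarith)⟩⟩
  · rintro ⟨hdet, hr, ⟨hr1, hρσ⟩ | ⟨hr1, hρσ⟩⟩
    · obtain ⟨π, hπ, x, hx, y, hy, rfl, rfl, hxy⟩ :=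
        exists_isSwitchingFunction_deriv_lt hρσ (abs_lt.2 hρ) (neg_pos.2 hr)
      exact ⟨π, hπ.odd, hπ.differentiableAt, hπ.deriv_pos, hπ.concaveOn, hπ.eq_one, y, x, hy, hx,
        rfl, rfl, hdet, .inl ⟨by linarith, by linarith⟩⟩
    · obtain ⟨π, hπ, x, hx, y, hy, rfl, rfl, hxy⟩ :=
        exists_isSwitchingFunction_deriv_lt hρσ (abs_lt.2 hσ) (inv_pos.2 (neg_pos.2 hr))
      have hxy := (inv_mul_lt_iff₀ (neg_pos.2 hr)).1 hxy
      exact ⟨π, hπ.odd, hπ.differentiableAt, hπ.deriv_pos, hπ.concaveOn, hπ.eq_one, x, y, hx, hy,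
        rfl, rfl, hdet, .inr ⟨by linarith, by linarith⟩⟩
end

section
/- Let a₁, a₂, p, q, r be real numbers with q ≠ 0 and p² + r·q < 0, and let ω = √(−(p² + rq)) > 0. Define F_xx = −2a₁p, F_xy = −ω·a₁, G_xx = (2p/ω)·(a₁p + a₂q), and G_xy = a₁p + a₂q. Then (1/(16ω))·(F_xx·F_xy − G_xx·G_xy − F_xx·G_xx) = p·q·(a₁²·r + a₂²·q) / (8·(p² + rq)). In particular, since p² + rq < 0, this quantity is negative if and only if p·q·(a₁²·r + a₂²·q) > 0. -/
/-!
With `G = a₁p + a₂q`, the combination `F_xx F_xy − G_xx G_xy − F_xx G_xx` over `16ω` equals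
`p (a₁²ω² − G² + 2a₁pG) / (8ω²)`, and completing the square gives `−G² + 2a₁pG = a₁²p² − a₂²q²`.
Since `ω² + p² = −rq`, the numerator becomes `−pq(a₁²r + a₂²q)` while `8ω² = −8(p² + rq)`.
The sign statement follows because `p² + rq < 0`.
-/

lemma hopf_lyapunov_combination_eq (a₁ a₂ p q : ℝ) {ω : ℝ} (hω : ω ≠ 0) :
    1 / (16 * ω) * (-2 * a₁ * p * (-ω * a₁)
        - 2 * p / ω * (a₁ * p + a₂ * q) * (a₁ * p + a₂ * q)
        - -2 * a₁ * p * (2 * p / ω * (a₁ * p + a₂ * q)))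
      = p * (a₁ ^ 2 * (ω ^ 2 + p ^ 2) - a₂ ^ 2 * q ^ 2) / (8 * ω ^ 2) := by
  field_simp
  ring

theorem lyapunov_coefficient_formula_general
    (a₁ a₂ p q r : ℝ) (hdisc : p ^ 2 + r * q < 0)
    (ω Fxx Fxy Gxx Gxy : ℝ)
    (hω : ω = Real.sqrt (-(p ^ 2 + r * q)))
    (hFxx : Fxx = -2 * a₁ * p)
    (hFxy : Fxy = -ω * a₁)
    (hGxx : Gxx = (2 * p / ω) * (a₁ * p + a₂ * q))
    (hGxy : Gxy = a₁ * p + a₂ * q) :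
    0 < ω ∧
    (1 / (16 * ω)) * (Fxx * Fxy - Gxx * Gxy - Fxx * Gxx)
      = p * q * (a₁ ^ 2 * r + a₂ ^ 2 * q) / (8 * (p ^ 2 + r * q)) ∧
    ((1 / (16 * ω)) * (Fxx * Fxy - Gxx * Gxy - Fxx * Gxx) < 0 ↔
      0 < p * q * (a₁ ^ 2 * r + a₂ ^ 2 * q)) := by
  have hω_pos : 0 < ω := hω ▸ Real.sqrt_pos.mpr (neg_pos.mpr hdisc)
  have hω_sq : ω ^ 2 = -(p ^ 2 + r * q) := hω ▸ Real.sq_sqrt (neg_nonneg.mpr hdisc.le)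
  have h_formula : (1 / (16 * ω)) * (Fxx * Fxy - Gxx * Gxy - Fxx * Gxx)
      = p * q * (a₁ ^ 2 * r + a₂ ^ 2 * q) / (8 * (p ^ 2 + r * q)) := by
    subst hFxx hFxy hGxx hGxy
    rw [hopf_lyapunov_combination_eq a₁ a₂ p q hω_pos.ne', hω_sq]
    field_simp
    ring
  refine ⟨hω_pos, h_formula, ?_⟩
  rw [h_formula, div_lt_iff_of_neg (by linarith), zero_mul]

/-- Computation of the first Lyapunov coefficient of a Hopf bifurcation: with
`ω = √(−(p² + rq)) > 0`, `F_xx = −2a₁p`, `F_xy = −ωa₁`, `G_xx = (2p/ω)(a₁p + a₂q)`,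
`G_xy = a₁p + a₂q`, one has
`(1/(16ω))·(F_xx·F_xy − G_xx·G_xy − F_xx·G_xx) = pq(a₁²r + a₂²q)/(8(p² + rq))`;
in particular this quantity is negative iff `pq(a₁²r + a₂²q) > 0`. -/
theorem lyapunov_coefficient_formula
    (a₁ a₂ p q r : ℝ) (hq : q ≠ 0) (hdisc : p ^ 2 + r * q < 0)
    (ω Fxx Fxy Gxx Gxy : ℝ)
    (hω : ω = Real.sqrt (-(p ^ 2 + r * q)))
    (hFxx : Fxx = -2 * a₁ * p)
    (hFxy : Fxy = -ω * a₁)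
    (hGxx : Gxx = (2 * p / ω) * (a₁ * p + a₂ * q))
    (hGxy : Gxy = a₁ * p + a₂ * q) :
    0 < ω ∧
    (1 / (16 * ω)) * (Fxx * Fxy - Gxx * Gxy - Fxx * Gxx)
      = p * q * (a₁ ^ 2 * r + a₂ ^ 2 * q) / (8 * (p ^ 2 + r * q)) ∧
    ((1 / (16 * ω)) * (Fxx * Fxy - Gxx * Gxy - Fxx * Gxx) < 0 ↔
      0 < p * q * (a₁ ^ 2 * r + a₂ ^ 2 * q)) :=
  lyapunov_coefficient_formula_general a₁ a₂ p q r hdisc ω Fxx Fxy Gxx Gxy hω hFxx hFxy hGxx hGxy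
end

section
/- For real parameters a₂ and κ, the map Ψ(u, v) = ((11/2)uv − u + 5v, κ(a₂uv − (1/2)u + v)) has total derivative at the origin equal to the matrix [[−1, 5], [−κ/2, κ]]. For κ = 1, this matrix has trace 0 and determinant 3/2, hence its eigenvalues are ±i√(3/2). Moreover, with a₁ = 11/2, b₁ = −1, c₁ = 5, d₁ = 0, b₂ = −1/2, c₂ = 1, d₂ = 0, the quantity a₁²(a₂d₂ − b₂c₂) − a₂²(a₁d₁ − b₁c₁) equals 121/8 − 5a₂², which is positive whenever 3/2 < a₂ < 11√10/20. -/
/-! The nonlinearity of `Ψ` is a multiple of `u v`, which vanishes to second order at the origin,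
so the derivative there is the linear part. A `2 × 2` matrix `[[a, b], [c, d]]` with `b ≠ 0`
has `(b, μ - a)` as eigenvector for every root `μ` of its characteristic polynomial; at `κ = 1`
that polynomial is `μ² + 3/2`, with roots `±i√(3/2)`. -/

open Matrix

theorem hasFDerivAt_mulVec_add_mul_smul_zero {n : ℕ} (A : Matrix (Fin n) (Fin n) ℝ)
    (i j : Fin n) (c : Fin n → ℝ) :
    HasFDerivAt (fun w : Fin n → ℝ => A *ᵥ w + (w i * w j) • c)
      (LinearMap.toContinuousLinearMap (mulVecLin A)) 0 := by
  have hproduct : HasFDerivAt (fun w : Fin n → ℝ => w i * w j)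
      (0 : (Fin n → ℝ) →L[ℝ] ℝ) 0 :=
    ((hasFDerivAt_apply i 0).mul (hasFDerivAt_apply j 0)).congr_fderiv (by simp)
  simpa using
    (LinearMap.toContinuousLinearMap (mulVecLin A)).hasFDerivAt.add
      (hproduct.smul_const c)

theorem Matrix.mulVec_fin_two_eigenvector {R : Type*} [CommRing R] (a b c d μ : R)
    (hμ : μ ^ 2 - (a + d) * μ + (a * d - b * c) = 0) :
    !![a, b; c, d] *ᵥ ![b, μ - a] = μ • ![b, μ - a] := by
  ext k
  fin_cases k
  · simp
    ring
  · simp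
    linear_combination -hμ

theorem Matrix.exists_fin_two_eigenvector {R : Type*} [CommRing R] [Nontrivial R]
    (a b c d μ : R) (hb : b ≠ 0) (hμ : μ ^ 2 - (a + d) * μ + (a * d - b * c) = 0) :
    ∃ w : Fin 2 → R, w ≠ 0 ∧ !![a, b; c, d] *ᵥ w = μ • w :=
  ⟨![b, μ - a], fun h => hb (congrFun h 0), mulVec_fin_two_eigenvector a b c d μ hμ⟩

/-- The map `Ψ(u,v) = ((11/2)uv − u + 5v, κ(a₂uv − (1/2)u + v))` has total derivative
`[[−1, 5], [−κ/2, κ]]` at the origin; for `κ = 1` this matrix has trace `0` and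
determinant `3/2`, hence eigenvalues `±i√(3/2)`; and with `a₁ = 11/2, b₁ = −1, c₁ = 5,
d₁ = 0, b₂ = −1/2, c₂ = 1, d₂ = 0` the quantity
`a₁²(a₂d₂ − b₂c₂) − a₂²(a₁d₁ − b₁c₁)` equals `121/8 − 5a₂²`, positive for
`3/2 < a₂ < 11√10/20`. -/
theorem ramp_example2_hopf_data (a₂ κ : ℝ)
    (Ψ : (Fin 2 → ℝ) → (Fin 2 → ℝ))
    (hΨ : ∀ w : Fin 2 → ℝ,
      Ψ w = ![(11 / 2) * w 0 * w 1 - w 0 + 5 * w 1,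
              κ * (a₂ * w 0 * w 1 - (1 / 2) * w 0 + w 1)]) :
    HasFDerivAt Ψ
      (LinearMap.toContinuousLinearMap
        (Matrix.mulVecLin !![(-1 : ℝ), 5; -κ / 2, κ])) 0 ∧
    Matrix.trace !![(-1 : ℝ), 5; -(1 / 2), 1] = 0 ∧
    Matrix.det !![(-1 : ℝ), 5; -(1 / 2), 1] = 3 / 2 ∧
    (∃ w : Fin 2 → ℂ, w ≠ 0 ∧
      (!![(-1 : ℂ), 5; -(1 / 2), 1]).mulVec w
        = (Complex.I * Real.sqrt (3 / 2)) • w) ∧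
    (∃ w : Fin 2 → ℂ, w ≠ 0 ∧
      (!![(-1 : ℂ), 5; -(1 / 2), 1]).mulVec w
        = (-(Complex.I * Real.sqrt (3 / 2))) • w) ∧
    (11 / 2 : ℝ) ^ 2 * (a₂ * 0 - (-(1 / 2)) * 1) - a₂ ^ 2 * ((11 / 2) * 0 - (-1) * 5)
      = 121 / 8 - 5 * a₂ ^ 2 ∧
    (3 / 2 < a₂ → a₂ < 11 * Real.sqrt 10 / 20 → 0 < 121 / 8 - 5 * a₂ ^ 2) := by
  have hΨ_split :
      Ψ = fun w => !![(-1 : ℝ), 5; -κ / 2, κ] *ᵥ w + (w 0 * w 1) • ![11 / 2, κ * a₂] := by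
    funext w
    rw [hΨ]
    ext k
    fin_cases k <;> simp [vecHead, vecTail] <;> ring
  have hμ_sq : (Complex.I * Real.sqrt (3 / 2)) ^ 2 = -(3 / 2) := by
    rw [mul_pow, Complex.I_sq, ← Complex.ofReal_pow, Real.sq_sqrt (by norm_num)]
    push_cast
    ring
  refine ⟨hΨ_split ▸ hasFDerivAt_mulVec_add_mul_smul_zero _ 0 1 _,
    by norm_num [trace_fin_two], by norm_num [det_fin_two],
    exists_fin_two_eigenvector _ _ _ _ _ (by norm_num) (by linear_combination hμ_sq),
    exists_fin_two_eigenvector _ _ _ _ _ (by norm_num) (by linear_combination hμ_sq),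
    by ring, fun ha hlt => ?_⟩
  have hbound_sq : (11 * Real.sqrt 10 / 20) ^ 2 = 121 / 40 := by
    rw [div_pow, mul_pow, Real.sq_sqrt (by norm_num)]
    norm_num
  nlinarith [pow_lt_pow_left₀ hlt (by linarith) two_ne_zero]
end

section
/- Define the polynomials f(x, y) = (25√6/128)x²y + (11/32)x² − (11√6/64)xy and g(x, y) = −(√6/128)x³ − (3/128)y³ + (27/64)x²y + (√6/256)xy² − (5√6/96)x² + (5/32)xy. With all partial derivatives evaluated at the origin (so f_xx = 11/16, f_xy = −11√6/64, g_xx = −5√6/48, g_xy = 5/32, g_xxy = 27/32, g_yyy = −9/64) and ω = √6/8, the first Lyapunov quantity a = (1/16)(g_xxy + g_yyy) + (1/(16ω))(f_xx·f_xy − g_xx·g_xy − f_xx·g_xx) equals 59/2048, which is positive. -/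
/-!
Freezing one variable turns `f` and `g` into cubic polynomials in the other, with coefficients
polynomial in the frozen one, and the derivative of a cubic is again a cubic; so every partial
derivative at the origin is a coefficient read off after at most three differentiations. In the
Lyapunov quantity each term of the second bracket is a rational multiple of `√6 = 8ω`, so the
`√6` cancels and what remains is rational arithmetic.
-/

def cubic {R : Type*} [Semiring R] (a b c d x : R) : R :=
  a * x ^ 3 + b * x ^ 2 + c * x + d

@[simp]
theorem cubic_zero {R : Type*} [Semiring R] (a b c d : R) : cubic a b c d 0 = d := by
  simp [cubic]

section Deriv

variable {𝕜 : Type*} [NontriviallyNormedField 𝕜] (a b c d : 𝕜)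

theorem hasDerivAt_cubic (x : 𝕜) :
    HasDerivAt (cubic a b c d) (cubic 0 (3 * a) (2 * b) c x) x := by
  have h := ((((hasDerivAt_pow 3 x).const_mul a).add ((hasDerivAt_pow 2 x).const_mul b)).add
    ((hasDerivAt_id' x).const_mul c)).add_const d
  refine h.congr_deriv ?_
  simp only [cubic]
  norm_num
  ring

theorem deriv_cubic : deriv (cubic a b c d) = cubic 0 (3 * a) (2 * b) c :=
  funext fun x => (hasDerivAt_cubic a b c d x).deriv

end Deriv

/-- First Lyapunov quantity for the Hill-regularized system (second example): for the
canonical-form nonlinearities `f(x,y) = (25√6/128)x²y + (11/32)x² − (11√6/64)xy` and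
`g(x,y) = −(√6/128)x³ − (3/128)y³ + (27/64)x²y + (√6/256)xy² − (5√6/96)x² + (5/32)xy`,
the partial derivatives at the origin are `f_xx = 11/16`, `f_xy = −11√6/64`,
`g_xx = −5√6/48`, `g_xy = 5/32`, `g_xxy = 27/32`, `g_yyy = −9/64`, and with
`ω = √6/8` the quantity
`a = (1/16)(g_xxy + g_yyy) + (1/(16ω))(f_xx f_xy − g_xx g_xy − f_xx g_xx)`
equals `59/2048 > 0` (subcritical Hopf bifurcation). -/
theorem hill_example2_lyapunov_quantity (f g : ℝ → ℝ → ℝ)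
    (hf : ∀ x y : ℝ, f x y = (25 * Real.sqrt 6 / 128) * x ^ 2 * y
        + (11 / 32) * x ^ 2 - (11 * Real.sqrt 6 / 64) * x * y)
    (hg : ∀ x y : ℝ, g x y = -(Real.sqrt 6 / 128) * x ^ 3 - (3 / 128) * y ^ 3
        + (27 / 64) * x ^ 2 * y + (Real.sqrt 6 / 256) * x * y ^ 2
        - (5 * Real.sqrt 6 / 96) * x ^ 2 + (5 / 32) * x * y) :
    deriv (deriv (fun x : ℝ => f x 0)) 0 = 11 / 16 ∧
    deriv (fun y : ℝ => deriv (fun x : ℝ => f x y) 0) 0 = -(11 * Real.sqrt 6 / 64) ∧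
    deriv (deriv (fun x : ℝ => g x 0)) 0 = -(5 * Real.sqrt 6 / 48) ∧
    deriv (fun y : ℝ => deriv (fun x : ℝ => g x y) 0) 0 = 5 / 32 ∧
    deriv (fun y : ℝ => deriv (deriv (fun x : ℝ => g x y)) 0) 0 = 27 / 32 ∧
    deriv (deriv (deriv (fun y : ℝ => g 0 y))) 0 = -(9 / 64) ∧
    (1 / 16) * ((27 / 32) + -(9 / 64))
      + (1 / (16 * (Real.sqrt 6 / 8))) * ((11 / 16) * (-(11 * Real.sqrt 6 / 64))
          - (-(5 * Real.sqrt 6 / 48)) * (5 / 32)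
          - (11 / 16) * (-(5 * Real.sqrt 6 / 48)))
      = 59 / 2048 ∧
    (0 : ℝ) < 59 / 2048 := by
  set s := Real.sqrt 6
  have hf_x : ∀ y, (fun x => f x y) = cubic 0 (25 * s / 128 * y + 11 / 32) (-(11 * s / 64) * y) 0 :=
    fun y => funext fun x => by rw [hf, cubic]; ring
  have hg_x : ∀ y, (fun x => g x y) =
      cubic (-(s / 128)) (27 / 64 * y - 5 * s / 96) (s / 256 * y ^ 2 + 5 / 32 * y)
        (-(3 / 128) * y ^ 3) :=
    fun y => funext fun x => by rw [hg, cubic]; ring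
  have hf_xy : (fun y => deriv (fun x => f x y) 0) = cubic 0 0 (-(11 * s / 64)) 0 :=
    funext fun y => by rw [hf_x, deriv_cubic, cubic_zero, cubic]; ring
  have hg_xy : (fun y => deriv (fun x => g x y) 0) = cubic 0 (s / 256) (5 / 32) 0 :=
    funext fun y => by rw [hg_x, deriv_cubic, cubic_zero, cubic]; ring
  have hg_xxy : (fun y => deriv (deriv fun x => g x y) 0) = cubic 0 0 (27 / 32) (-(5 * s / 48)) :=
    funext fun y => by rw [hg_x, deriv_cubic, deriv_cubic, cubic_zero, cubic]; ring
  have hg_y : (fun y => g 0 y) = cubic (-(3 / 128)) 0 0 0 :=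
    funext fun y => by rw [hg, cubic]; ring
  have hs : s ≠ 0 := by positivity
  refine ⟨?_, ?_, ?_, ?_, ?_, ?_, ?_, by norm_num⟩
  · rw [hf_x, deriv_cubic, deriv_cubic, cubic_zero]; ring
  · rw [hf_xy, deriv_cubic, cubic_zero]
  · rw [hg_x, deriv_cubic, deriv_cubic, cubic_zero]; ring
  · rw [hg_xy, deriv_cubic, cubic_zero]
  · rw [hg_xxy, deriv_cubic, cubic_zero]
  · rw [hg_y, deriv_cubic, deriv_cubic, deriv_cubic, cubic_zero]; ring
  · field_simp
    ring
end
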